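/- arXiv:2602.16849 — 4 statements merged into one kernel-verified Lean document; each statement's English description precedes it below -/
import Mathlib

section
/- Under the full diversification parametrization (as in the indicator-function result), for any ε ∈ (0,1), if a ≥ C·(Np)⁻¹·log(p/ε) for an appropriate constant C, then for every pair (x,y) ∈ Z_p², the ℓ1-distance between softmax(f(x,y)) and the one-hot vector at (x+y) mod p is at most ε. -/
/-!
For `x ≠ y` the two "doubling" indicators never fire at the same index (2 is invertible modulo the
odd number `p`), and for `x = y` they both fire at `(x + y) mod p`; either way the correct logit
exceeds every other one by at least `τ = aNp/8`. A gap `τ` forces the softmax to put mass at most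
`(p - 1) e^{-τ}` off the top index, so its `ℓ¹`-distance to the one-hot vector is at most
`2 (p - 1) e^{-τ}`, which is `≤ 2 (p - 1) (ε/p)² ≤ ε` once `τ ≥ 2 log (p/ε)`, i.e. for `C = 16`.
-/

open Real Finset

/-- The logit function implemented by the fully diversified network:
`f(x,y)[j] = (aN/2)(-1 + (p/2)𝟙[(x+y) mod p = j] + (p/4)(𝟙[2x mod p = j] + 𝟙[2y mod p = j]))`. -/
noncomputable def fNet (p N : ℕ) (a : ℝ) (x y j : ℕ) : ℝ :=
  a * (N : ℝ) / 2 *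
    (-1 + (p : ℝ) / 2 * (if (x + y) % p = j then 1 else 0)
      + (p : ℝ) / 4 * ((if (2 * x) % p = j then 1 else 0)
        + (if (2 * y) % p = j then 1 else 0)))

section Softmax

variable {ι : Type*}

theorem sum_abs_sub_ite_eq_of_sum_eq_one [DecidableEq ι] (s : Finset ι) {q : ι → ℝ}
    (hq : ∀ j ∈ s, 0 ≤ q j) (hsum : ∑ j ∈ s, q j = 1) {i : ι} (hi : i ∈ s) :
    ∑ j ∈ s, |q j - if j = i then 1 else 0| = 2 * (1 - q i) := by
  have hrest : ∑ j ∈ s.erase i, q j = 1 - q i := by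
    rw [← hsum, ← add_sum_erase s q hi]; ring
  have hqi : q i ≤ 1 := by
    linarith [sum_nonneg fun j (hj : j ∈ s.erase i) => hq j (mem_of_mem_erase hj)]
  rw [← add_sum_erase s _ hi, if_pos rfl, abs_of_nonpos (by linarith),
    sum_congr rfl fun j hj => by
      rw [if_neg (ne_of_mem_erase hj), sub_zero, abs_of_nonneg (hq j (mem_of_mem_erase hj))],
    hrest]
  ring

noncomputable def softmax (s : Finset ι) (ν : ι → ℝ) (j : ι) : ℝ :=
  exp (ν j) / ∑ k ∈ s, exp (ν k)

variable {s : Finset ι}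

theorem softmax_nonneg (ν : ι → ℝ) (j : ι) : 0 ≤ softmax s ν j := by
  unfold softmax; positivity

theorem sum_softmax {ν : ι → ℝ} (hs : s.Nonempty) : ∑ j ∈ s, softmax s ν j = 1 := by
  unfold softmax
  rw [← sum_div, div_self (sum_pos (fun k _ => exp_pos (ν k)) hs).ne']

theorem one_sub_softmax_le_of_gap [DecidableEq ι] {ν : ι → ℝ} {i : ι} (hi : i ∈ s) {τ : ℝ}
    (hgap : ∀ j ∈ s, j ≠ i → ν j + τ ≤ ν i) :
    1 - softmax s ν i ≤ ((#s : ℝ) - 1) * exp (-τ) := by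
  set S := ∑ k ∈ s, exp (ν k)
  set T := ∑ j ∈ s.erase i, exp (ν j)
  have hST : exp (ν i) + T = S := add_sum_erase s (fun k => exp (ν k)) hi
  have hT : T ≤ ((#s : ℝ) - 1) * exp (-τ) * exp (ν i) := by
    calc T ≤ ∑ _j ∈ s.erase i, exp (-τ) * exp (ν i) :=
          sum_le_sum fun j hj => by
            rw [← exp_add, exp_le_exp]
            linarith [hgap j (mem_of_mem_erase hj) (ne_of_mem_erase hj)]
      _ = ((#s : ℝ) - 1) * exp (-τ) * exp (ν i) := by
          rw [sum_const, card_erase_of_mem hi, nsmul_eq_mul,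
            Nat.cast_pred (card_pos.mpr ⟨i, hi⟩)]
          ring
  have hT0 : 0 ≤ T := sum_nonneg fun j _ => (exp_pos (ν j)).le
  calc 1 - softmax s ν i = T / S := by
        rw [show softmax s ν i = exp (ν i) / S from rfl, ← hST]
        field_simp
        ring
    _ ≤ T / exp (ν i) := div_le_div_of_nonneg_left hT0 (exp_pos _) (by linarith)
    _ ≤ ((#s : ℝ) - 1) * exp (-τ) := (div_le_iff₀ (exp_pos _)).mpr hT

theorem sum_abs_softmax_sub_ite_le_of_gap [DecidableEq ι] {ν : ι → ℝ} {i : ι} (hi : i ∈ s)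
    {τ : ℝ} (hgap : ∀ j ∈ s, j ≠ i → ν j + τ ≤ ν i) :
    ∑ j ∈ s, |softmax s ν j - if j = i then 1 else 0| ≤ 2 * (((#s : ℝ) - 1) * exp (-τ)) := by
  rw [sum_abs_sub_ite_eq_of_sum_eq_one s (fun j _ => softmax_nonneg ν j)
    (sum_softmax ⟨i, hi⟩) hi]
  linarith [one_sub_softmax_le_of_gap hi hgap]

end Softmax

theorem eq_of_two_mul_mod_eq {p x y : ℕ} (hodd : Odd p) (hx : x < p) (hy : y < p)
    (h : 2 * x % p = 2 * y % p) : x = y := by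
  have hxy : x ≡ y [MOD p] :=
    Nat.ModEq.cancel_left_of_coprime (Nat.coprime_two_right.mpr hodd) h
  rwa [Nat.ModEq, Nat.mod_eq_of_lt hx, Nat.mod_eq_of_lt hy] at hxy

theorem fNet_add_le_fNet_add_mod {p N x y j : ℕ} {a : ℝ} (hodd : Odd p) (hx : x < p)
    (hy : y < p) (ha : 0 ≤ a) (hj : j ≠ (x + y) % p) :
    fNet p N a x y j + a * N * p / 8 ≤ fNet p N a x y ((x + y) % p) := by
  have hdoubling : ((if 2 * x % p = j then 1 else 0) + (if 2 * y % p = j then 1 else 0) : ℝ)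
      ≤ 1 + ((if 2 * x % p = (x + y) % p then 1 else 0)
        + (if 2 * y % p = (x + y) % p then 1 else 0)) := by
    rcases eq_or_ne x y with rfl | hxy
    · rw [two_mul, if_pos rfl]
      split_ifs <;> norm_num
    · have hnot : ¬(2 * x % p = j ∧ 2 * y % p = j) := fun ⟨h₁, h₂⟩ =>
        hxy (eq_of_two_mul_mod_eq hodd hx hy (h₁.trans h₂.symm))
      split_ifs <;> first | exact absurd ⟨‹_›, ‹_›⟩ hnot | norm_num
  have haNp : 0 ≤ a * N * p := by positivity
  unfold fNet
  rw [if_pos rfl, if_neg hj.symm]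
  nlinarith [mul_nonneg haNp (sub_nonneg.mpr hdoubling)]

theorem two_mul_pred_mul_exp_neg_le {n ε τ : ℝ} (hn : 1 ≤ n) (hε0 : 0 < ε) (hε1 : ε < 1)
    (hτ : 2 * log (n / ε) ≤ τ) : 2 * ((n - 1) * exp (-τ)) ≤ ε := by
  have hn0 : 0 < n := by linarith
  have hexp : exp (-τ) ≤ (ε / n) ^ 2 :=
    calc exp (-τ) ≤ exp (2 * log (ε / n)) := by
          rw [exp_le_exp, ← inv_div, log_inv]; linarith
      _ = (ε / n) ^ 2 := by rw [two_mul, exp_add, exp_log (by positivity), sq]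
  have hquad : 2 * (n - 1) * ε ≤ n ^ 2 := by nlinarith
  calc 2 * ((n - 1) * exp (-τ)) ≤ 2 * ((n - 1) * (ε / n) ^ 2) := by gcongr
    _ = ε * (2 * (n - 1) * ε / n ^ 2) := by ring
    _ ≤ ε * 1 := by gcongr; exact (div_le_one (by positivity)).mpr hquad
    _ = ε := mul_one ε

theorem softmax_close_to_onehot_general (p N : ℕ) (hodd : Odd p) (hN : 0 < N) :
    ∃ C : ℝ, 0 < C ∧ ∀ ε : ℝ, 0 < ε → ε < 1 → ∀ a : ℝ,
      a ≥ C * ((N : ℝ) * (p : ℝ))⁻¹ * Real.log ((p : ℝ) / ε) →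
      ∀ x y : ℕ, x < p → y < p →
        ∑ j ∈ Finset.range p,
          |Real.exp (fNet p N a x y j) / (∑ i ∈ Finset.range p, Real.exp (fNet p N a x y i))
            - (if j = (x + y) % p then 1 else 0)| ≤ ε := by
  refine ⟨16, by norm_num, fun ε hε0 hε1 a ha x y hx hy => ?_⟩
  have hp : (1 : ℝ) ≤ p := by exact_mod_cast hodd.pos
  have hNp : (0 : ℝ) < N * p := by positivity
  have hlog : 0 < log (p / ε) := log_pos ((one_lt_div hε0).mpr (by linarith))
  have ha0 : 0 ≤ a := le_trans (by positivity) ha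
  have hτ : 2 * log (p / ε) ≤ a * N * p / 8 := by
    have h16 : 16 * log (p / ε) / (N * p) ≤ a := by
      rwa [div_eq_mul_inv, mul_right_comm]
    linarith [(div_le_iff₀ hNp).mp h16]
  have hmem : (x + y) % p ∈ range p := mem_range.mpr (Nat.mod_lt _ hodd.pos)
  have hsoftmax := sum_abs_softmax_sub_ite_le_of_gap (ν := fNet p N a x y) hmem
    fun j _ hj => fNet_add_le_fNet_add_mod hodd hx hy ha0 hj
  rw [card_range] at hsoftmax
  exact hsoftmax.trans (two_mul_pred_mul_exp_neg_le hp hε0 hε1 hτ)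

/-- For the fully diversified parametrization, taking `a ≥ C (Np)⁻¹ log(p/ε)` for an
appropriate constant `C > 0` ensures that for every input pair `(x,y) ∈ Z_p²`, the
ℓ1-distance between the softmax of the logits and the one-hot vector at `(x+y) mod p`
is at most `ε`. -/
theorem softmax_close_to_onehot (p N : ℕ) (hp : p.Prime) (hodd : Odd p) (hN : 0 < N) :
    ∃ C : ℝ, 0 < C ∧ ∀ ε : ℝ, 0 < ε → ε < 1 → ∀ a : ℝ,
      a ≥ C * ((N : ℝ) * (p : ℝ))⁻¹ * Real.log ((p : ℝ) / ε) →
      ∀ x y : ℕ, x < p → y < p →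
        ∑ j ∈ Finset.range p,
          |Real.exp (fNet p N a x y j) / (∑ i ∈ Finset.range p, Real.exp (fNet p N a x y i))
            - (if j = (x + y) % p then 1 else 0)| ≤ ε :=
  softmax_close_to_onehot_general p N hodd hN
end

section
/- Consider the coupled ODE system ∂_t α = 2p·α·β·cos(D), ∂_t β = p·α²·cos(D), ∂_t D = -p·(4β + α²/β)·sin(D) with β(t) > 0. Then the quantity sin(D(t))·β(t)·α(t)² is constant in time. -/
open Real

theorem hasDerivAt_sin_mul_mul_sq {α β D : ℝ → ℝ} {a b d t : ℝ} (hα : HasDerivAt α a t)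
    (hβ : HasDerivAt β b t) (hD : HasDerivAt D d t) :
    HasDerivAt (fun s => sin (D s) * β s * α s ^ 2)
      ((cos (D t) * d * β t + sin (D t) * b) * α t ^ 2 + sin (D t) * β t * (2 * α t * a)) t := by
  have hα2 : HasDerivAt (fun s => α s ^ 2) (2 * α t * a) t := by
    simpa using hα.fun_pow 2
  exact ((hD.sin).fun_mul hβ).fun_mul hα2

theorem conservation_prod_general (p : ℝ) (α β D : ℝ → ℝ)
    (hβpos : ∀ t, 0 < β t)
    (hα : ∀ t, HasDerivAt α (2 * p * α t * β t * Real.cos (D t)) t)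
    (hβ : ∀ t, HasDerivAt β (p * (α t) ^ 2 * Real.cos (D t)) t)
    (hD : ∀ t, HasDerivAt D (-p * (4 * β t + (α t) ^ 2 / β t) * Real.sin (D t)) t) :
    ∀ t, Real.sin (D t) * β t * (α t) ^ 2 = Real.sin (D 0) * β 0 * (α 0) ^ 2 := by
  have hderiv_zero : ∀ t, HasDerivAt (fun s => sin (D s) * β s * α s ^ 2) 0 t := fun t => by
    refine (hasDerivAt_sin_mul_mul_sq (hα t) (hβ t) (hD t)).congr_deriv ?_
    -- The three terms are `p sin D cos D` times `-(4α²β² + α⁴)`, `α⁴` and `4α²β²`.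
    field_simp [(hβpos t).ne']
    ring
  exact fun t => is_const_of_deriv_eq_zero (fun s => (hderiv_zero s).differentiableAt)
    (fun s => (hderiv_zero s).deriv) t 0

/-- For the coupled system `α' = 2pαβcos D`, `β' = pα²cos D`,
`D' = -p(4β + α²/β)sin D` with `β > 0`, the quantity `sin(D)·β·α²` is conserved. -/
theorem conservation_prod (p : ℝ) (hp : 0 < p) (α β D : ℝ → ℝ)
    (hβpos : ∀ t, 0 < β t)
    (hα : ∀ t, HasDerivAt α (2 * p * α t * β t * Real.cos (D t)) t)
    (hβ : ∀ t, HasDerivAt β (p * (α t) ^ 2 * Real.cos (D t)) t)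
    (hD : ∀ t, HasDerivAt D (-p * (4 * β t + (α t) ^ 2 / β t) * Real.sin (D t)) t) :
    ∀ t, Real.sin (D t) * β t * (α t) ^ 2 = Real.sin (D 0) * β 0 * (α 0) ^ 2 :=
  conservation_prod_general p α β D hβpos hα hβ hD
end

section
/- Consider per-frequency ODE systems ∂_t β_k = p·(2β_k² - κ²)·cos(D_k), ∂_t D_k = -p·(6β_k - κ²/β_k)·sin(D_k), for k = 1,...,K, each with identical initial magnitude β_k(0) = κ > 0 and distinct D_k(0) ∈ (0, π). If D_k(0) ≤ D_τ(0), then β_k(t) ≥ β_τ(t) for all t ≥ 0. -/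
/-!
Along each trajectory the quantity `(2β³ - κ²β) sin D` is conserved, which keeps `D` in `(0, π)`
and `2β² > κ²`. On that region the system is cooperative in `(-β, D)`. At `t = 0` the amplitude
gap `β_k - β_τ` vanishes but has derivative `pκ² (cos D_k(0) - cos D_τ(0)) > 0`, so both gaps
`β_k - β_τ` and `D_τ - D_k` are positive just after `0`. At a first time where one of them
vanishes, that gap has a strictly positive derivative although it was positive just before, which
is impossible; if both vanish at once, backward uniqueness for the locally Lipschitz vector field
forces `D_k(0) = D_τ(0)`.
-/

open Real Set Filter Topology

section Calculus

variable {f : ℝ → ℝ} {f' x : ℝ}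

theorem HasDerivAt.eventually_nhdsGT_pos (hf : HasDerivAt f f' x) (hf' : 0 < f')
    (hx : f x = 0) : ∀ᶠ y in 𝓝[>] x, 0 < f y := by
  filter_upwards [nhdsWithin_le_nhds (eventually_nhdsWithin_sign_eq_of_deriv_pos
    (hf.deriv ▸ hf') hx), self_mem_nhdsWithin] with y hy hxy
  rwa [sign_pos (sub_pos.2 hxy), sign_eq_one_iff] at hy

theorem HasDerivAt.eventually_nhdsLT_neg (hf : HasDerivAt f f' x) (hf' : 0 < f')
    (hx : f x = 0) : ∀ᶠ y in 𝓝[<] x, f y < 0 := by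
  filter_upwards [nhdsWithin_le_nhds (eventually_nhdsWithin_sign_eq_of_deriv_pos
    (hf.deriv ▸ hf') hx), self_mem_nhdsWithin] with y hy hyx
  rwa [sign_neg (sub_neg.2 hyx), sign_eq_neg_one_iff] at hy

theorem HasDerivAt.nonpos_of_pos_of_eq_zero {a : ℝ} (hf : HasDerivAt f f' x) (hax : a < x)
    (hpos : ∀ y ∈ Ioo a x, 0 < f y) (hx : f x = 0) : f' ≤ 0 := by
  by_contra! hf'
  obtain ⟨y, hy, hay⟩ := ((hf.eventually_nhdsLT_neg hf' hx).and (Ioo_mem_nhdsLT hax)).exists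
  exact (hpos y hay).not_gt hy

end Calculus

theorem forall_mem_of_forall_Ioo_mem {X : Type*} [TopologicalSpace X] {f : ℝ → X} {U : Set X}
    {a : ℝ} (hU : IsOpen U) (hf : ContinuousOn f (Ioi a)) (hstart : ∀ᶠ t in 𝓝[>] a, f t ∈ U)
    (hstep : ∀ T > a, (∀ t ∈ Ioo a T, f t ∈ U) → f T ∈ U) : ∀ t > a, f t ∈ U := by
  intro T haT
  by_contra hT
  obtain ⟨u, hau, hu⟩ := mem_nhdsGT_iff_exists_Ioo_subset.1 hstart
  set c := min u T
  have hac : a < c := lt_min hau haT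
  set F := Icc c T ∩ f ⁻¹' Uᶜ
  have hF : IsClosed F := (hf.mono fun t ht => hac.trans_le ht.1).preimage_isClosed_of_isClosed
    isClosed_Icc hU.isClosed_compl
  have hbdd : BddBelow F := ⟨c, fun t ht => ht.1.1⟩
  have hmem : sInf F ∈ F := hF.csInf_mem ⟨T, ⟨min_le_right u T, le_rfl⟩, hT⟩ hbdd
  refine hmem.2 (hstep _ (hac.trans_le hmem.1.1) fun t ht => ?_)
  by_cases htc : t < c
  · exact hu ⟨ht.1, htc.trans_le (min_le_left u T)⟩
  · by_contra htU
    exact notMem_of_lt_csInf ht.2 hbdd ⟨⟨not_lt.1 htc, ht.2.le.trans hmem.1.2⟩, htU⟩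

theorem eqOn_Icc_of_hasDerivAt_of_eq_right {E : Type*} [NormedAddCommGroup E] [NormedSpace ℝ E]
    {v : E → E} {U : Set E} (hv : LocallyLipschitzOn U v) {f g : ℝ → E} {a b : ℝ}
    (hf : ∀ t ∈ Icc a b, HasDerivAt f (v (f t)) t ∧ f t ∈ U)
    (hg : ∀ t ∈ Icc a b, HasDerivAt g (v (g t)) t ∧ g t ∈ U) (hb : f b = g b) :
    EqOn f g (Icc a b) := by
  have hfc : ContinuousOn f (Icc a b) := fun t ht => (hf t ht).1.continuousAt.continuousWithinAt
  have hgc : ContinuousOn g (Icc a b) := fun t ht => (hg t ht).1.continuousAt.continuousWithinAt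
  set s := f '' Icc a b ∪ g '' Icc a b
  have hs : IsCompact s :=
    (isCompact_Icc.image_of_continuousOn hfc).union (isCompact_Icc.image_of_continuousOn hgc)
  have hsU : s ⊆ U := by
    rintro _ (⟨t, ht, rfl⟩ | ⟨t, ht, rfl⟩)
    exacts [(hf t ht).2, (hg t ht).2]
  obtain ⟨K, hK⟩ := (hv.mono hsU).exists_lipschitzOnWith_of_compact hs
  exact ODE_solution_unique_of_mem_Icc_left (v := fun _ => v) (s := fun _ => s) (fun _ _ => hK)
    hfc (fun t ht => (hf t (Ioc_subset_Icc_self ht)).1.hasDerivWithinAt)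
    (fun t ht => .inl ⟨t, Ioc_subset_Icc_self ht, rfl⟩)
    hgc (fun t ht => (hg t (Ioc_subset_Icc_self ht)).1.hasDerivWithinAt)
    (fun t ht => .inr ⟨t, Ioc_subset_Icc_self ht, rfl⟩) hb

structure IsTrajectory (p κ : ℝ) (b d : ℝ → ℝ) : Prop where
  pos : ∀ t, 0 ≤ t → 0 < b t
  hasDerivAt_amplitude : ∀ t, 0 ≤ t → HasDerivAt b (p * (2 * b t ^ 2 - κ ^ 2) * cos (d t)) t
  hasDerivAt_phase : ∀ t, 0 ≤ t → HasDerivAt d (-p * (6 * b t - κ ^ 2 / b t) * sin (d t)) t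

noncomputable def vectorField (p κ : ℝ) (x : ℝ × ℝ) : ℝ × ℝ :=
  (p * (2 * x.1 ^ 2 - κ ^ 2) * cos x.2, -p * (6 * x.1 - κ ^ 2 / x.1) * sin x.2)

theorem locallyLipschitzOn_vectorField (p κ : ℝ) :
    LocallyLipschitzOn (Ioi 0 ×ˢ univ) (vectorField p κ) :=
  ContDiffOn.locallyLipschitzOn ((convex_Ioi 0).prod convex_univ) <| by
    unfold vectorField
    fun_prop (disch := exact fun x hx => ne_of_gt hx.1)

theorem phase_rate_lt {p κ b₁ b₂ x : ℝ} (hp : 0 < p) (hb₂ : 0 < b₂) (hb : b₂ < b₁)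
    (hx : 0 < sin x) :
    -p * (6 * b₁ - κ ^ 2 / b₁) * sin x < -p * (6 * b₂ - κ ^ 2 / b₂) * sin x := by
  have : κ ^ 2 / b₁ ≤ κ ^ 2 / b₂ := div_le_div_of_nonneg_left (sq_nonneg κ) hb₂ hb.le
  nlinarith [mul_pos hp hx]

theorem amplitude_rate_lt {p κ b x₁ x₂ : ℝ} (hp : 0 < p) (hb : κ ^ 2 < 2 * b ^ 2)
    (hx₁ : 0 ≤ x₁) (hx₂ : x₂ ≤ π) (hx : x₁ < x₂) :
    p * (2 * b ^ 2 - κ ^ 2) * cos x₂ < p * (2 * b ^ 2 - κ ^ 2) * cos x₁ :=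
  mul_lt_mul_of_pos_left (cos_lt_cos_of_nonneg_of_le_pi hx₁ hx₂ hx) (mul_pos hp (sub_pos.2 hb))

namespace IsTrajectory

variable {p κ : ℝ} {b d b₁ d₁ b₂ d₂ : ℝ → ℝ} {t : ℝ}

theorem hasDerivAt_vectorField (h : IsTrajectory p κ b d) (ht : 0 ≤ t) :
    HasDerivAt (fun s => (b s, d s)) (vectorField p κ (b t, d t)) t :=
  (h.hasDerivAt_amplitude t ht).prodMk (h.hasDerivAt_phase t ht)

theorem eqOn_of_eq (h₁ : IsTrajectory p κ b₁ d₁) (h₂ : IsTrajectory p κ b₂ d₂) {T : ℝ}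
    (hb : b₁ T = b₂ T) (hd : d₁ T = d₂ T) :
    EqOn (fun s => (b₁ s, d₁ s)) (fun s => (b₂ s, d₂ s)) (Icc 0 T) :=
  eqOn_Icc_of_hasDerivAt_of_eq_right (locallyLipschitzOn_vectorField p κ)
    (fun s hs => ⟨h₁.hasDerivAt_vectorField hs.1, h₁.pos s hs.1, trivial⟩)
    (fun s hs => ⟨h₂.hasDerivAt_vectorField hs.1, h₂.pos s hs.1, trivial⟩) (by rw [hb, hd])

theorem energy_eq (h : IsTrajectory p κ b d) (ht : 0 ≤ t) :
    (2 * b t ^ 3 - κ ^ 2 * b t) * sin (d t) = (2 * b 0 ^ 3 - κ ^ 2 * b 0) * sin (d 0) := by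
  set E : ℝ → ℝ := fun s => (2 * b s ^ 3 - κ ^ 2 * b s) * sin (d s)
  have hE : ∀ s, 0 ≤ s → HasDerivAt E 0 s := fun s hs => by
    have hb := h.hasDerivAt_amplitude s hs
    refine ((((hb.pow 3).const_mul 2).sub (hb.const_mul (κ ^ 2))).mul
      (h.hasDerivAt_phase s hs).sin).congr_deriv ?_
    simp only [Pi.sub_apply, Pi.pow_apply]
    field_simp [(h.pos s hs).ne']
    ring
  exact constant_of_has_deriv_right_zero
    (fun s hs => (hE s hs.1).continuousAt.continuousWithinAt)
    (fun s hs => (hE s hs.1).hasDerivWithinAt) t ⟨ht, le_rfl⟩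

theorem mem_Ioo_and_sq_lt (h : IsTrajectory p κ b d) (hb0 : κ ^ 2 < 2 * b 0 ^ 2)
    (hd0 : d 0 ∈ Ioo 0 π) (ht : 0 ≤ t) : d t ∈ Ioo 0 π ∧ κ ^ 2 < 2 * b t ^ 2 := by
  have hE0 : 0 < (2 * b 0 ^ 3 - κ ^ 2 * b 0) * sin (d 0) := by
    have : 0 < 2 * b 0 ^ 3 - κ ^ 2 * b 0 := by nlinarith [h.pos 0 le_rfl]
    exact mul_pos this (sin_pos_of_pos_of_lt_pi hd0.1 hd0.2)
  have hsin : ∀ s ∈ Icc 0 t, sin (d s) ≠ 0 := fun s hs hs0 => by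
    have := h.energy_eq hs.1
    rw [hs0, mul_zero] at this
    exact hE0.ne this
  have hcont : ContinuousOn d (Icc 0 t) :=
    fun s hs => (h.hasDerivAt_phase s hs.1).continuousAt.continuousWithinAt
  have hdt : d t ∈ Ioo 0 π := by
    by_contra hdt
    rcases not_and_or.1 hdt with hdt | hdt <;> rw [not_lt] at hdt
    · obtain ⟨s, hs, hds⟩ := intermediate_value_Icc' ht hcont ⟨hdt, hd0.1.le⟩
      exact hsin s hs (by rw [hds, sin_zero])
    · obtain ⟨s, hs, hds⟩ := intermediate_value_Icc ht hcont ⟨hd0.2.le, hdt⟩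
      exact hsin s hs (by rw [hds, sin_pi])
  refine ⟨hdt, ?_⟩
  have hEt := (h.energy_eq ht).symm ▸ hE0
  have := pos_of_mul_pos_left hEt (sin_pos_of_pos_of_lt_pi hdt.1 hdt.2).le
  nlinarith [h.pos t ht]

theorem amplitude_lt_and_phase_lt_of_forall_Ioo (h₁ : IsTrajectory p κ b₁ d₁)
    (h₂ : IsTrajectory p κ b₂ d₂) (hp : 0 < p) (hd0 : d₁ 0 ≠ d₂ 0) {T : ℝ} (hT : 0 < T)
    (hd₁T : d₁ T ∈ Ioo 0 π) (hd₂T : d₂ T ∈ Ioo 0 π) (hb₁T : κ ^ 2 < 2 * b₁ T ^ 2)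
    (hbefore : ∀ s ∈ Ioo 0 T, b₂ s < b₁ s ∧ d₁ s < d₂ s) : b₂ T < b₁ T ∧ d₁ T < d₂ T := by
  have hcl : T ∈ closure (Ioo 0 T) := by rw [closure_Ioo hT.ne]; exact right_mem_Icc.2 hT.le
  have hbT : b₂ T ≤ b₁ T := ContinuousWithinAt.closure_le hcl
    (h₂.hasDerivAt_amplitude T hT.le).continuousAt.continuousWithinAt
    (h₁.hasDerivAt_amplitude T hT.le).continuousAt.continuousWithinAt
    fun s hs => (hbefore s hs).1.le
  have hdT : d₁ T ≤ d₂ T := ContinuousWithinAt.closure_le hcl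
    (h₁.hasDerivAt_phase T hT.le).continuousAt.continuousWithinAt
    (h₂.hasDerivAt_phase T hT.le).continuousAt.continuousWithinAt
    fun s hs => (hbefore s hs).2.le
  rcases hbT.lt_or_eq with hb | hb <;> rcases hdT.lt_or_eq with hd | hd
  · exact ⟨hb, hd⟩
  · have := ((h₂.hasDerivAt_phase T hT.le).sub (h₁.hasDerivAt_phase T hT.le))
      |>.nonpos_of_pos_of_eq_zero hT (fun s hs => sub_pos.2 (hbefore s hs).2)
        (sub_eq_zero.2 hd.symm)
    rw [hd] at this
    exact absurd this (not_le.2 (sub_pos.2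
      (phase_rate_lt hp (h₂.pos T hT.le) hb (sin_pos_of_pos_of_lt_pi hd₂T.1 hd₂T.2))))
  · have := ((h₁.hasDerivAt_amplitude T hT.le).sub (h₂.hasDerivAt_amplitude T hT.le))
      |>.nonpos_of_pos_of_eq_zero hT (fun s hs => sub_pos.2 (hbefore s hs).1)
        (sub_eq_zero.2 hb.symm)
    rw [hb] at this
    exact absurd this (not_le.2 (sub_pos.2 (amplitude_rate_lt hp hb₁T hd₁T.1.le hd₂T.2.le hd)))
  · exact absurd (congrArg Prod.snd (h₁.eqOn_of_eq h₂ hb.symm hd ⟨le_rfl, hT.le⟩)) hd0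

theorem amplitude_lt_and_phase_lt (h₁ : IsTrajectory p κ b₁ d₁) (h₂ : IsTrajectory p κ b₂ d₂)
    (hp : 0 < p) (hb0 : b₁ 0 = b₂ 0) (hκ : κ ^ 2 < 2 * b₁ 0 ^ 2) (hd₁ : d₁ 0 ∈ Ioo 0 π)
    (hd₂ : d₂ 0 ∈ Ioo 0 π) (hd : d₁ 0 < d₂ 0) : ∀ t > 0, b₂ t < b₁ t ∧ d₁ t < d₂ t := by
  have inv₁ := fun t (ht : 0 ≤ t) => h₁.mem_Ioo_and_sq_lt hκ hd₁ ht
  have inv₂ := fun t (ht : 0 ≤ t) => h₂.mem_Ioo_and_sq_lt (hb0 ▸ hκ) hd₂ ht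
  have hcont : ContinuousOn (fun s => (b₁ s - b₂ s, d₂ s - d₁ s)) (Ioi 0) := fun t ht =>
    (((h₁.hasDerivAt_amplitude t ht.le).sub (h₂.hasDerivAt_amplitude t ht.le)).continuousAt.prodMk
      ((h₂.hasDerivAt_phase t ht.le).sub (h₁.hasDerivAt_phase t ht.le)).continuousAt)
      |>.continuousWithinAt
  have hstart : ∀ᶠ t in 𝓝[>] 0, 0 < b₁ t - b₂ t ∧ 0 < d₂ t - d₁ t := by
    have hamp := ((h₁.hasDerivAt_amplitude 0 le_rfl).sub (h₂.hasDerivAt_amplitude 0 le_rfl))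
      |>.eventually_nhdsGT_pos
        (by rw [← hb0, sub_pos]; exact amplitude_rate_lt hp hκ hd₁.1.le hd₂.2.le hd)
        (sub_eq_zero.2 hb0)
    have hphase : ∀ᶠ t in 𝓝 0, 0 < d₂ t - d₁ t :=
      ((h₂.hasDerivAt_phase 0 le_rfl).sub (h₁.hasDerivAt_phase 0 le_rfl)).continuousAt.eventually
        (lt_mem_nhds (sub_pos.2 hd))
    exact hamp.and (nhdsWithin_le_nhds hphase)
  have hgaps := forall_mem_of_forall_Ioo_mem (isOpen_Ioi.prod isOpen_Ioi) hcont hstart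
    fun T hT hbefore => by
      simp only [mem_prod, mem_Ioi, sub_pos] at hbefore ⊢
      exact h₁.amplitude_lt_and_phase_lt_of_forall_Ioo h₂ hp hd.ne hT (inv₁ T hT.le).1
        (inv₂ T hT.le).1 (inv₁ T hT.le).2 hbefore
  intro t ht
  simpa [sub_pos] using hgaps t ht

end IsTrajectory

/-- Order preservation across frequencies: for the per-frequency systems
`β_k' = p(2β_k² - κ²)cos D_k`, `D_k' = -p(6β_k - κ²/β_k)sin D_k` with identical initial
magnitudes `β_k(0) = κ > 0` and distinct initial phases `D_k(0) ∈ (0, π)`, a smaller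
initial phase difference yields a larger magnitude for all time. -/
theorem rank_preservation (p κ : ℝ) (hp : 0 < p) (hκ : 0 < κ) (K : ℕ)
    (β D : Fin K → ℝ → ℝ)
    (hβpos : ∀ k t, 0 ≤ t → 0 < β k t)
    (hβ0 : ∀ k, β k 0 = κ)
    (hD0 : ∀ k, D k 0 ∈ Set.Ioo 0 π)
    (hdistinct : ∀ k τ, k ≠ τ → D k 0 ≠ D τ 0)
    (hβ : ∀ k t, 0 ≤ t →
      HasDerivAt (β k) (p * (2 * (β k t) ^ 2 - κ ^ 2) * Real.cos (D k t)) t)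
    (hD : ∀ k t, 0 ≤ t →
      HasDerivAt (D k) (-p * (6 * β k t - κ ^ 2 / β k t) * Real.sin (D k t)) t)
    (k τ : Fin K) (hle : D k 0 ≤ D τ 0) :
    ∀ t, 0 ≤ t → β k t ≥ β τ t := by
  intro t ht
  rcases eq_or_ne k τ with rfl | hkτ
  · exact le_rfl
  rcases ht.eq_or_lt with rfl | ht
  · rw [hβ0 k, hβ0 τ]
  have traj : ∀ i, IsTrajectory p κ (β i) (D i) := fun i => ⟨hβpos i, hβ i, hD i⟩
  have hκ2 : κ ^ 2 < 2 * β k 0 ^ 2 := by rw [hβ0]; nlinarith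
  exact ((traj k).amplitude_lt_and_phase_lt (traj τ) hp (by rw [hβ0, hβ0]) hκ2 (hD0 k) (hD0 τ)
    (hle.lt_of_ne (hdistinct k τ hkτ)) t ht).1.le
end

section
/- Let U_(1) ≤ U_(2) be the two smallest order statistics of n = (p-1)/2 i.i.d. uniforms on (0, π). Then P(U_(2)² - U_(1)² ≤ 8π²·p^{-2(c+1)}) ≤ 2 - 2·(1 - 2p^{-(c+1)})^{(p-1)/2}, which is O(p^{-c}). -/
/-!
Write `t = 2πε` with `ε = p^{-(c+1)}`. If `U_(1) > t` and `U_(2) - U_(1) > t` then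
`U_(2)² - U_(1)² ≥ 2 U_(1) (U_(2) - U_(1)) > 2t²`, so the event in question forces one of
`U_(1) ≤ t` or `U_(2) - U_(1) ≤ t`. For `n` i.i.d. uniforms on `(0, L)` both
`P(U_(1) > t)` and `P(U_(2) - U_(1) > t)` equal `(1 - t/L)^n`: the first by independence, the
second because `U_(2) - U_(1) > t` means that some `U_i` lies more than `t` below all the others,
which is a disjoint union of `n` events each of probability `∫₀^L ((L - a - t)⁺/L)^{n-1} da/L`.
A union bound finishes the proof.
-/

open Real MeasureTheory ProbabilityTheory Set Finset
open scoped ENNReal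

section OrderStatistics

variable {ι : Type*} [Fintype ι] {u : ι → ℝ} {u₁ u₂ : ℝ}

lemma le_apply_of_lt_iff_card_filter_eq_zero
    (h₁ : ∀ r, r < u₁ ↔ (univ.filter fun i => u i ≤ r).card = 0) (i : ι) : u₁ ≤ u i := by
  by_contra! h
  have hempty := (h₁ (u i)).1 h
  rw [card_eq_zero, filter_eq_empty_iff] at hempty
  exact hempty (mem_univ i) le_rfl

lemma lt_of_forall_lt_of_lt_iff_card_filter_eq_zero
    (h₁ : ∀ r, r < u₁ ↔ (univ.filter fun i => u i ≤ r).card = 0) {r : ℝ}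
    (h : ∀ i, r < u i) : r < u₁ :=
  (h₁ r).2 <| card_eq_zero.2 <| filter_eq_empty_iff.2 fun i _ => (h i).not_ge

lemma add_lt_of_forall_ne_add_lt
    (h₁ : ∀ r, r < u₁ ↔ (univ.filter fun i => u i ≤ r).card = 0)
    (h₂ : ∀ r, r < u₂ ↔ (univ.filter fun i => u i ≤ r).card ≤ 1) {t : ℝ} {i : ι}
    (hi : ∀ j ≠ i, u i + t < u j) : u₁ + t < u₂ := by
  refine (h₂ _).2 <| card_le_one.2 fun a ha b hb => ?_
  have h_eq_i : ∀ j ∈ univ.filter fun j => u j ≤ u₁ + t, j = i := fun j hj => by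
    by_contra hji
    linarith [(mem_filter.1 hj).2, hi j hji, le_apply_of_lt_iff_card_filter_eq_zero h₁ i]
  rw [h_eq_i a ha, h_eq_i b hb]

lemma two_mul_sq_lt_sq_sub_sq
    (h₁ : ∀ r, r < u₁ ↔ (univ.filter fun i => u i ≤ r).card = 0)
    (h₂ : ∀ r, r < u₂ ↔ (univ.filter fun i => u i ≤ r).card ≤ 1) {t : ℝ} (ht : 0 < t)
    (hmin : ∀ i, t < u i) (hgap : ∃ i, ∀ j ≠ i, u i + t < u j) :
    2 * t ^ 2 < u₂ ^ 2 - u₁ ^ 2 := by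
  obtain ⟨i, hi⟩ := hgap
  have hu₁ := lt_of_forall_lt_of_lt_iff_card_filter_eq_zero h₁ hmin
  have hu₂ := add_lt_of_forall_ne_add_lt h₁ h₂ hi
  nlinarith

end OrderStatistics

lemma integral_max_sub_pow {s L : ℝ} (hs : 0 ≤ s) (hsL : s ≤ L) (k : ℕ) :
    ∫ a in (0)..L, max (s - a) 0 ^ (k + 1) = s ^ (k + 2) / (k + 2) := by
  have hcont : Continuous fun a : ℝ => max (s - a) 0 ^ (k + 1) := by fun_prop
  rw [← intervalIntegral.integral_add_adjacent_intervals (b := s)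
    (hcont.intervalIntegrable _ _) (hcont.intervalIntegrable _ _)]
  have h_left : ∫ a in (0)..s, max (s - a) 0 ^ (k + 1) = ∫ a in (0)..s, (s - a) ^ (k + 1) :=
    intervalIntegral.integral_congr fun a ha => by
      rw [uIcc_of_le hs] at ha
      simp only [max_eq_left (sub_nonneg.2 ha.2)]
  have h_right : ∫ a in s..L, max (s - a) 0 ^ (k + 1) = 0 := by
    rw [intervalIntegral.integral_congr (g := fun _ => 0), intervalIntegral.integral_zero]
    intro a ha
    rw [uIcc_of_le hsL] at ha
    simp [max_eq_right (sub_nonpos.2 ha.1)]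
  rw [h_left, h_right, add_zero,
    intervalIntegral.integral_comp_sub_left (fun x => x ^ (k + 1)), integral_pow]
  push_cast
  ring

lemma measure_pi_forall_ne_add_lt (ν : Measure ℝ) [SigmaFinite ν] {m : ℕ} (i : Fin (m + 1))
    (t : ℝ) :
    Measure.pi (fun _ => ν) {x | ∀ j ≠ i, x i + t < x j} = ∫⁻ a, ν (Ioi (a + t)) ^ m ∂ν := by
  set T : Set (ℝ × (Fin m → ℝ)) := {q | ∀ k, q.1 + t < q.2 k}
  have hT : MeasurableSet T := by measurability
  have h_preimage : {x : Fin (m + 1) → ℝ | ∀ j ≠ i, x i + t < x j}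
      = MeasurableEquiv.piFinSuccAbove (fun _ => ℝ) i ⁻¹' T := by
    ext x
    simp [T, Fin.forall_iff_succAbove i, Fin.removeNth, Fin.succAbove_ne]
  have h_slice : ∀ a, Prod.mk a ⁻¹' T = univ.pi fun _ => Ioi (a + t) := fun a => by
    ext y
    simp [T]
  rw [h_preimage, (measurePreserving_piFinSuccAbove (fun _ => ν) i).measure_preimage
    hT.nullMeasurableSet, Measure.prod_apply hT]
  simp [h_slice, Measure.pi_pi]

section UniformIoo

variable {L t : ℝ}

lemma cond_Ioo_zero_eq :
    volume[|Ioo 0 L] = (ENNReal.ofReal L)⁻¹ • volume.restrict (Ioo 0 L) := by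
  rw [ProbabilityTheory.cond, Real.volume_Ioo, sub_zero]

lemma cond_Ioo_zero_Ioi (hL : 0 < L) {s : ℝ} (hs : 0 ≤ s) :
    volume[|Ioo 0 L] (Ioi s) = ENNReal.ofReal ((L - s) / L) := by
  rw [cond_Ioo_zero_eq, Measure.smul_apply, Measure.restrict_apply measurableSet_Ioi,
    Ioi_inter_Ioo, max_eq_left hs, Real.volume_Ioo, smul_eq_mul,
    ENNReal.ofReal_div_of_pos hL, ENNReal.div_eq_inv_mul]

lemma lintegral_cond_Ioo_zero_Ioi_add_pow (hL : 0 < L) (ht : 0 ≤ t) (htL : t ≤ L) (m : ℕ) :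
    ∫⁻ a, volume[|Ioo 0 L] (Ioi (a + t)) ^ (m + 1) ∂volume[|Ioo 0 L]
      = ENNReal.ofReal (((L - t) / L) ^ (m + 2) / (m + 2)) := by
  set g : ℝ → ℝ := fun a => max (L - t - a) 0 ^ (m + 1) / L ^ (m + 1)
  have hg : ∀ᵐ a ∂volume[|Ioo 0 L],
      volume[|Ioo 0 L] (Ioi (a + t)) ^ (m + 1) = ENNReal.ofReal (g a) := by
    filter_upwards [ae_cond_mem measurableSet_Ioo] with a ha
    simp only [g]
    rw [cond_Ioo_zero_Ioi hL (by linarith [ha.1]), ← div_pow, ENNReal.ofReal_pow (by positivity),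
      ← max_div_div_right hL.le, zero_div, sub_sub, add_comm t]
    simp
  have hg_int : IntegrableOn g (Ioo 0 L) :=
    (Continuous.integrableOn_Icc (by fun_prop)).mono_set Ioo_subset_Icc_self
  rw [lintegral_congr_ae hg, cond_Ioo_zero_eq, lintegral_smul_measure,
    ← ofReal_integral_eq_lintegral_ofReal hg_int (.of_forall fun a => by positivity),
    ← integral_Ioc_eq_integral_Ioo, ← intervalIntegral.integral_of_le hL.le,
    intervalIntegral.integral_div, integral_max_sub_pow (by linarith) (by linarith),
    smul_eq_mul, ← ENNReal.ofReal_inv_of_pos hL, ← ENNReal.ofReal_mul (by positivity)]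
  congr 1
  rw [div_pow]
  field_simp
  ring

lemma measure_pi_cond_Ioo_zero_forall_lt (hL : 0 < L) (ht : 0 ≤ t) (htL : t ≤ L) (n : ℕ) :
    Measure.pi (fun _ : Fin n => volume[|Ioo 0 L]) {x | ∀ i, t < x i}
      = ENNReal.ofReal (((L - t) / L) ^ n) := by
  have h_box : {x : Fin n → ℝ | ∀ i, t < x i} = univ.pi fun _ => Ioi t := by
    ext
    simp
  rw [h_box, Measure.pi_pi, prod_const, card_univ, Fintype.card_fin, cond_Ioo_zero_Ioi hL ht,
    ENNReal.ofReal_pow (div_nonneg (by linarith) hL.le)]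

/-- The spacing `U_(2) - U_(1)` has the same tail as the minimum `U_(1)`. -/
lemma measure_pi_cond_Ioo_zero_exists_forall_ne_add_lt (hL : 0 < L) (ht : 0 ≤ t) (htL : t ≤ L)
    (m : ℕ) :
    Measure.pi (fun _ : Fin (m + 2) => volume[|Ioo 0 L]) {x | ∃ i, ∀ j ≠ i, x i + t < x j}
      = ENNReal.ofReal (((L - t) / L) ^ (m + 2)) := by
  have hdisj : Pairwise (Function.onFun Disjoint
      fun i : Fin (m + 2) => {x : Fin (m + 2) → ℝ | ∀ j ≠ i, x i + t < x j}) :=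
    fun i k hik => Set.disjoint_left.2 fun x hi hk => by linarith [hi k hik.symm, hk i hik]
  rw [ofPred_exists, measure_iUnion hdisj fun i => by measurability, tsum_fintype]
  simp only [measure_pi_forall_ne_add_lt, lintegral_cond_Ioo_zero_Ioi_add_pow hL ht htL,
    sum_const, card_univ, Fintype.card_fin, nsmul_eq_mul]
  rw [← ENNReal.ofReal_natCast, ← ENNReal.ofReal_mul (by positivity)]
  congr 1
  push_cast
  field_simp

end UniformIoo

lemma one_sub_ofReal_add_one_sub_ofReal {r : ℝ} (hr₀ : 0 ≤ r) (hr₁ : r ≤ 1) :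
    (1 - ENNReal.ofReal r) + (1 - ENNReal.ofReal r) = ENNReal.ofReal (2 - 2 * r) := by
  rw [← ENNReal.ofReal_one, ← ENNReal.ofReal_sub _ hr₀,
    ← ENNReal.ofReal_add (by linarith) (by linarith)]
  ring_nf

theorem measure_sq_sub_sq_le_two_mul_sq_le {Ω : Type*} [MeasurableSpace Ω] {μ : Measure Ω}
    {L t : ℝ} (hL : 0 < L) (ht : 0 < t) (htL : t ≤ L) {n : ℕ}
    (hn : 2 ≤ n) {U : Fin n → Ω → ℝ} (hmeas : ∀ i, Measurable (U i)) (hindep : iIndepFun U μ)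
    (hunif : ∀ i, μ.map (U i) = volume[|Ioo 0 L]) {U1 U2 : Ω → ℝ}
    (hU1 : ∀ ω r, r < U1 ω ↔ (univ.filter fun i => U i ω ≤ r).card = 0)
    (hU2 : ∀ ω r, r < U2 ω ↔ (univ.filter fun i => U i ω ≤ r).card ≤ 1) :
    μ {ω | U2 ω ^ 2 - U1 ω ^ 2 ≤ 2 * t ^ 2} ≤ ENNReal.ofReal (2 - 2 * ((L - t) / L) ^ n) := by
  obtain ⟨m, rfl⟩ : ∃ m, n = m + 2 := ⟨n - 2, by omega⟩
  have : IsProbabilityMeasure volume[|Ioo 0 L] :=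
    cond_isProbabilityMeasure_of_finite (by simp [Real.volume_Ioo, hL])
      (by simp [Real.volume_Ioo])
  set V : Ω → Fin (m + 2) → ℝ := fun ω i => U i ω
  have hV : Measurable V := measurable_pi_lambda _ hmeas
  have h_law : μ.map V = Measure.pi fun _ => volume[|Ioo 0 L] := by
    rw [hindep.map_fun_eq_pi_map fun i => (hmeas i).aemeasurable]
    simp_rw [hunif]
  set A : Set (Fin (m + 2) → ℝ) := {x | ∀ i, t < x i}
  set B : Set (Fin (m + 2) → ℝ) := {x | ∃ i, ∀ j ≠ i, x i + t < x j}
  have h_sub : {ω | U2 ω ^ 2 - U1 ω ^ 2 ≤ 2 * t ^ 2} ⊆ V ⁻¹' (Aᶜ ∪ Bᶜ) := by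
    intro ω hω
    by_contra h
    simp only [Set.mem_preimage, Set.mem_union, Set.mem_compl_iff, not_or, not_not] at h
    exact (two_mul_sq_lt_sq_sub_sq (hU1 ω) (hU2 ω) ht h.1 h.2).not_ge hω
  have hr₀ : 0 ≤ (L - t) / L := div_nonneg (by linarith) hL.le
  have hr₁ : ((L - t) / L) ^ (m + 2) ≤ 1 :=
    pow_le_one₀ hr₀ ((div_le_one hL).2 (by linarith))
  calc μ {ω | U2 ω ^ 2 - U1 ω ^ 2 ≤ 2 * t ^ 2}
      ≤ μ.map V (Aᶜ ∪ Bᶜ) := (measure_mono h_sub).trans (Measure.le_map_apply hV.aemeasurable _)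
    _ ≤ μ.map V Aᶜ + μ.map V Bᶜ := measure_union_le _ _
    _ = ENNReal.ofReal (2 - 2 * ((L - t) / L) ^ (m + 2)) := by
      rw [h_law, prob_compl_eq_one_sub (by measurability),
        prob_compl_eq_one_sub (by measurability),
        measure_pi_cond_Ioo_zero_forall_lt hL ht.le htL,
        measure_pi_cond_Ioo_zero_exists_forall_ne_add_lt hL ht.le htL,
        one_sub_ofReal_add_one_sub_ofReal (by positivity) hr₁]

theorem order_statistic_gap_general {Ω : Type*} [MeasurableSpace Ω] (μ : Measure Ω)
    (p : ℕ) (c : ℝ) (hc : 0 < c)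
    (U : Fin ((p - 1) / 2) → Ω → ℝ) (hmeas : ∀ i, Measurable (U i))
    (hindep : iIndepFun U μ)
    (hunif : ∀ i, Measure.map (U i) μ =
      (ENNReal.ofReal π)⁻¹ • volume.restrict (Set.Ioo 0 π))
    (U1 U2 : Ω → ℝ)
    (hU1 : ∀ ω r, r < U1 ω ↔
      (Finset.univ.filter (fun i => U i ω ≤ r)).card = 0)
    (hU2 : ∀ ω r, r < U2 ω ↔
      (Finset.univ.filter (fun i => U i ω ≤ r)).card ≤ 1) :
    μ {ω | U2 ω ^ 2 - U1 ω ^ 2 ≤ 8 * π ^ 2 * (p : ℝ) ^ (-(2 * (c + 1)))} ≤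
      ENNReal.ofReal
        (2 - 2 * (1 - 2 * (p : ℝ) ^ (-(c + 1))) ^ ((p - 1) / 2)) := by
  rcases le_or_gt ((p - 1) / 2) 1 with hsmall | hn
  · -- with at most one sample, `hU2` would give `U2 ω < U2 ω`
    have hU2_absurd : ∀ ω, False := fun ω =>
      lt_irrefl _ <| (hU2 ω (U2 ω)).2 <| (card_filter_le _ _).trans (by simpa using hsmall)
    exact (measure_mono_null (fun ω _ => (hU2_absurd ω).elim) measure_empty).trans_le zero_le
  have hp_two : (2 : ℝ) ≤ p := by exact_mod_cast (by omega : 2 ≤ p)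
  set ε := (p : ℝ) ^ (-(c + 1))
  have hε : ε ≤ 1 / 2 :=
    calc ε ≤ (p : ℝ) ^ (-1 : ℝ) := rpow_le_rpow_of_exponent_le (by linarith) (by linarith)
      _ ≤ 1 / 2 := by rw [rpow_neg_one, one_div]; exact inv_anti₀ two_pos hp_two
  have hδ : 8 * π ^ 2 * (p : ℝ) ^ (-(2 * (c + 1))) = 2 * (2 * π * ε) ^ 2 := by
    rw [show -(2 * (c + 1)) = -(c + 1) * ((2 : ℕ) : ℝ) by push_cast; ring,
      rpow_mul_natCast (by positivity)]
    ring
  have h_ratio : 1 - 2 * ε = (π - 2 * π * ε) / π := by field_simp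
  rw [hδ, h_ratio]
  exact measure_sq_sub_sq_le_two_mul_sq_le pi_pos (by positivity) (by nlinarith [pi_pos]) hn
    hmeas hindep (fun i => (hunif i).trans cond_Ioo_zero_eq.symm) hU1 hU2

/-- Anti-concentration of the gap of the two smallest order statistics of
`n = (p-1)/2` i.i.d. uniforms on `(0, π)`:
`P(U_(2)² - U_(1)² ≤ 8π² p^{-2(c+1)}) ≤ 2 - 2(1 - 2p^{-(c+1)})^{(p-1)/2}`.
`U1` is the minimum (`r < U1(ω) ↔ no index i has U_i(ω) ≤ r`) and `U2` the
second-smallest value (`r < U2(ω) ↔ at most one index i has U_i(ω) ≤ r`). -/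
theorem order_statistic_gap {Ω : Type*} [MeasurableSpace Ω] (μ : Measure Ω)
    [IsProbabilityMeasure μ] (p : ℕ) (hp : p.Prime) (hodd : Odd p) (c : ℝ) (hc : 0 < c)
    (U : Fin ((p - 1) / 2) → Ω → ℝ) (hmeas : ∀ i, Measurable (U i))
    (hindep : iIndepFun U μ)
    (hunif : ∀ i, Measure.map (U i) μ =
      (ENNReal.ofReal π)⁻¹ • volume.restrict (Set.Ioo 0 π))
    (U1 U2 : Ω → ℝ)
    (hU1 : ∀ ω r, r < U1 ω ↔
      (Finset.univ.filter (fun i => U i ω ≤ r)).card = 0)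
    (hU2 : ∀ ω r, r < U2 ω ↔
      (Finset.univ.filter (fun i => U i ω ≤ r)).card ≤ 1) :
    μ {ω | U2 ω ^ 2 - U1 ω ^ 2 ≤ 8 * π ^ 2 * (p : ℝ) ^ (-(2 * (c + 1)))} ≤
      ENNReal.ofReal
        (2 - 2 * (1 - 2 * (p : ℝ) ^ (-(c + 1))) ^ ((p - 1) / 2)) :=
  order_statistic_gap_general μ p c hc U hmeas hindep hunif U1 U2 hU1 hU2
end
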